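/- Let (X,d) be a compact metric space with no isolated points which is generalized homogeneous, and let Λ be a finite nonempty set. Then the set of all F ∈ H_Λ(X) having the weak shadowing property on ℤ is residual (contains a countable intersection of open dense sets) in the complete metric space (H_Λ(X), ρ); i.e., weak shadowing is a generic property in H_Λ(X). -/

import Mathlib

/-!
Fix a finite net `c` and a radius `r`, and record which index sets `L` admit an orbit staying in
`⋃ j ∈ L, closedBall (c j) r`. Limits of orbits of nearby IFS are orbits, so this family is upper
semicontinuous in the IFS; being finite-valued, it is locally constant on an open dense set.
Intersecting over nets of mesh `→ 0` gives the residual set. At an IFS `f` in it, a pseudo-orbit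
closes up by compactness into a pseudo-cycle, generalized homogeneity turns that into a periodic
orbit of a `ρ`-close IFS `g`, and local constancy transfers the trapping of this periodic orbit
near the pseudo-orbit to an orbit of `f`.
-/

/-- The metric `ρ` on the space `H_Λ(X)` of IFS of homeomorphisms:
`ρ(F,G) = sup_{λ,x} max (dist (F λ x) (G λ x)) (dist (F λ ⁻¹ x) (G λ ⁻¹ x))`. -/
noncomputable def rhoIFS {X Λ : Type*} [MetricSpace X] (f g : Λ → X ≃ₜ X) : ℝ :=
  ⨆ p : Λ × X, max (dist (f p.1 p.2) (g p.1 p.2))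
    (dist ((f p.1).symm p.2) ((g p.1).symm p.2))

/-- A two-sided sequence `x : ℤ → X` is an orbit of the IFS of homeomorphisms `f`. -/
def IsOrbitZ {X Λ : Type*} [TopologicalSpace X] (f : Λ → X ≃ₜ X) (x : ℤ → X) : Prop :=
  ∃ σ : ℤ → Λ, ∀ n : ℤ, x (n + 1) = f (σ n) (x n)

/-- Given a finite open cover `V`, `JFam V f` is the family of sets `L` of indices such
that some orbit of `f` meets `V j` for every `j ∈ L`. -/
def JFam {X Λ : Type*} [TopologicalSpace X] {k : ℕ} (V : Fin k → Set X) (f : Λ → X ≃ₜ X) :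
    Set (Set (Fin k)) :=
  {L | ∃ x : ℤ → X, IsOrbitZ f x ∧ ∀ j ∈ L, ∃ n : ℤ, x n ∈ V j}

/-- `δ`-pseudo orbit on `ℤ` of an IFS of homeomorphisms. -/
def IsPseudoOrbitZ {X Λ : Type*} [MetricSpace X] (f : Λ → X ≃ₜ X) (δ : ℝ)
    (x : ℤ → X) : Prop :=
  ∃ σ : ℤ → Λ, ∀ n : ℤ, dist (x (n + 1)) (f (σ n) (x n)) < δ

/-- Weak shadowing property on `ℤ` for an IFS of homeomorphisms. -/
def WeakShadowingZ {X Λ : Type*} [MetricSpace X] (f : Λ → X ≃ₜ X) : Prop :=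
  ∀ ε > (0 : ℝ), ∃ δ > (0 : ℝ), ∀ x : ℤ → X, IsPseudoOrbitZ f δ x →
    ∃ y : ℤ → X, IsOrbitZ f y ∧ ∀ n : ℤ, ∃ m : ℤ, dist (y n) (x m) < ε

/-- `X` is generalized homogeneous. -/
def GenHomogeneous (X : Type*) [MetricSpace X] : Prop :=
  ∀ ε > (0 : ℝ), ∃ δ > (0 : ℝ), ∀ (n : ℕ) (x y : Fin n → X),
    Function.Injective x → Function.Injective y →
    (∀ i, dist (x i) (y i) ≤ δ) →
    ∃ h : X ≃ₜ X, (∀ i, h (x i) = y i) ∧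
      ∀ z : X, max (dist (h z) z) (dist (h.symm z) z) ≤ ε

section

open Set Filter Topology Metric Function

variable {X Λ : Type*} [MetricSpace X]

lemma bddAbove_rhoIFS [CompactSpace X] (f g : Λ → X ≃ₜ X) :
    BddAbove (range fun p : Λ × X => max (dist (f p.1 p.2) (g p.1 p.2))
      (dist ((f p.1).symm p.2) ((g p.1).symm p.2))) := by
  refine ⟨diam (univ : Set X), ?_⟩
  rintro _ ⟨p, rfl⟩
  exact max_le (dist_le_diam_of_mem isCompact_univ.isBounded trivial trivial)
    (dist_le_diam_of_mem isCompact_univ.isBounded trivial trivial)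

lemma dist_apply_le_rhoIFS [CompactSpace X] (f g : Λ → X ≃ₜ X) (l : Λ) (u : X) :
    dist (f l u) (g l u) ≤ rhoIFS f g :=
  (le_max_left _ _).trans (le_ciSup (bddAbove_rhoIFS f g) (l, u))

lemma dist_symm_apply_le_rhoIFS [CompactSpace X] (f g : Λ → X ≃ₜ X) (l : Λ) (u : X) :
    dist ((f l).symm u) ((g l).symm u) ≤ rhoIFS f g :=
  (le_max_right _ _).trans (le_ciSup (bddAbove_rhoIFS f g) (l, u))

lemma rhoIFS_le {f g : Λ → X ≃ₜ X} {c : ℝ} (hc : 0 ≤ c)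
    (h : ∀ l u, dist (f l u) (g l u) ≤ c ∧ dist ((f l).symm u) ((g l).symm u) ≤ c) :
    rhoIFS f g ≤ c :=
  Real.iSup_le (fun p => max_le (h p.1 p.2).1 (h p.1 p.2).2) hc

lemma rhoIFS_nonneg (f g : Λ → X ≃ₜ X) : 0 ≤ rhoIFS f g :=
  Real.iSup_nonneg fun _ => le_max_of_le_left dist_nonneg

lemma rhoIFS_self (f : Λ → X ≃ₜ X) : rhoIFS f f = 0 :=
  le_antisymm (rhoIFS_le le_rfl fun _ _ => by simp) (rhoIFS_nonneg f f)

lemma rhoIFS_triangle [CompactSpace X] (f g h : Λ → X ≃ₜ X) :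
    rhoIFS f h ≤ rhoIFS f g + rhoIFS g h := by
  refine rhoIFS_le (add_nonneg (rhoIFS_nonneg f g) (rhoIFS_nonneg g h)) fun l u => ⟨?_, ?_⟩
  · exact (dist_triangle _ (g l u) _).trans
      (add_le_add (dist_apply_le_rhoIFS f g l u) (dist_apply_le_rhoIFS g h l u))
  · exact (dist_triangle _ ((g l).symm u) _).trans
      (add_le_add (dist_symm_apply_le_rhoIFS f g l u) (dist_symm_apply_le_rhoIFS g h l u))

lemma exists_forall_dist_lt_of_continuous [CompactSpace X] {ι : Type*} [Finite ι]
    (F : ι → X → X) (hF : ∀ i, Continuous (F i)) {c : ℝ} (hc : 0 < c) :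
    ∃ δ > 0, ∀ i u v, dist u v < δ → dist (F i u) (F i v) < c := by
  have := Fintype.ofFinite ι
  obtain ⟨δ, hδ, h⟩ := uniformContinuous_iff.1
    (CompactSpace.uniformContinuous_of_continuous (continuous_pi fun i => hF i :
      Continuous fun u i => F i u)) c hc
  exact ⟨δ, hδ, fun i u v huv => (dist_le_pi_dist (fun i => F i u) (fun i => F i v) i).trans_lt
    (h huv)⟩

lemma exists_rhoIFS_trans_lt [CompactSpace X] [Finite Λ] (f : Λ → X ≃ₜ X) {η : ℝ}
    (hη : 0 < η) : ∃ ε > 0, ∀ h : X ≃ₜ X, (∀ z, max (dist (h z) z) (dist (h.symm z) z) ≤ ε) →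
      rhoIFS f (fun l => (f l).trans h) < η := by
  obtain ⟨δ, hδ, hcont⟩ := exists_forall_dist_lt_of_continuous (fun l => (f l).symm)
    (fun l => (f l).symm.continuous) (half_pos hη)
  refine ⟨min δ η / 2, by positivity, fun h hh => ?_⟩
  have hmin : min δ η / 2 < min δ η := half_lt_self (lt_min hδ hη)
  refine (rhoIFS_le (half_pos hη).le fun l u => ⟨?_, ?_⟩).trans_lt (half_lt_self hη)
  · rw [Homeomorph.trans_apply, dist_comm]
    exact (le_max_left _ _).trans <| (hh _).trans <| by linarith [min_le_right δ η]
  · rw [Homeomorph.symm_trans_apply, dist_comm]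
    refine (hcont l _ _ ?_).le
    exact ((le_max_right _ _).trans (hh u)).trans_lt (hmin.trans_le (min_le_left _ _))

lemma nhdsNE_neBot_of_forall_exists_dist_lt
    (hni : ∀ x : X, ∀ r > (0 : ℝ), ∃ z : X, z ≠ x ∧ dist z x < r) (x : X) : (𝓝[≠] x).NeBot :=
  mem_closure_iff_nhdsWithin_neBot.1 <| Metric.mem_closure_iff.2 fun r hr =>
    (hni x r hr).imp fun _ hz => ⟨hz.1, by rw [dist_comm]; exact hz.2⟩

lemma exists_dist_lt_notMem [∀ x : X, (𝓝[≠] x).NeBot] (c : X) {r : ℝ} (hr : 0 < r)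
    {F : Set X} (hF : F.Finite) : ∃ v, dist v c < r ∧ v ∉ F :=
  (((infinite_of_mem_nhds c (ball_mem_nhds c hr)).sdiff hF).nonempty).imp fun _ hv => hv

lemma exists_injective_near [∀ x : X, (𝓝[≠] x).NeBot] {ι : Type*} [Finite ι]
    (φ : ι → X → X) (hφ : ∀ i, Injective (φ i)) (z : ι → X) {r : ℝ} (hr : 0 < r) :
    ∃ w : ι → X, (∀ i, dist (w i) (z i) < r) ∧ Injective w ∧ Injective fun i => φ i (w i) := by
  classical
  have := Fintype.ofFinite ι
  suffices ∀ s : Finset ι, ∃ w : ι → X, (∀ i, dist (w i) (z i) < r) ∧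
      InjOn w s ∧ InjOn (fun i => φ i (w i)) s by
    obtain ⟨w, hwz, hw, hφw⟩ := this Finset.univ
    exact ⟨w, hwz, injOn_univ.1 (by simpa using hw), injOn_univ.1 (by simpa using hφw)⟩
  intro s
  induction s using Finset.induction_on with
  | empty => exact ⟨z, fun i => by simpa using hr, by simp, by simp⟩
  | insert a s ha ih =>
    obtain ⟨w, hwz, hw, hφw⟩ := ih
    have hF : (w '' s ∪ φ a ⁻¹' ((fun i => φ i (w i)) '' s)).Finite :=
      (s.finite_toSet.image w).union ((s.finite_toSet.image _).preimage (hφ a).injOn)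
    obtain ⟨v, hvz, hvF⟩ := exists_dist_lt_notMem (z a) hr hF
    have heq : EqOn (update w a v) w s := fun i hi => update_of_ne (ne_of_mem_of_not_mem hi ha) _ _
    refine ⟨update w a v, fun i => ?_, ?_, ?_⟩
    · rcases eq_or_ne i a with rfl | hia
      · simpa using hvz
      · simpa [hia] using hwz i
    · rw [Finset.coe_insert, injOn_insert (Finset.mem_coe.not.2 ha), heq.image_eq]
      exact ⟨hw.congr heq.symm, by simpa using fun h => hvF (Or.inl h)⟩
    · have heq' : EqOn (fun i => φ i (update w a v i)) (fun i => φ i (w i)) s :=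
        fun i hi => by simp only [heq hi]
      rw [Finset.coe_insert, injOn_insert (Finset.mem_coe.not.2 ha), heq'.image_eq]
      exact ⟨hφw.congr heq'.symm, by simpa using fun h => hvF (Or.inr h)⟩

def IsPseudoCycle {N : ℕ} (f : Λ → X ≃ₜ X) (δ : ℝ) (z : ZMod N → X) (τ : ZMod N → Λ) : Prop :=
  ∀ i, dist (z (i + 1)) (f (τ i) (z i)) < δ

lemma isOrbitZ_of_forall_apply_eq_add_one {N : ℕ} {g : Λ → X ≃ₜ X} {w : ZMod N → X}
    {τ : ZMod N → Λ} (hw : ∀ i, g (τ i) (w i) = w (i + 1)) : IsOrbitZ g fun n : ℤ => w n :=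
  ⟨fun n => τ n, fun n => by push_cast; exact (hw n).symm⟩

lemma exists_lt_dist_lt [CompactSpace X] (x : ℕ → X) {δ : ℝ} (hδ : 0 < δ) :
    ∃ a b, a < b ∧ dist (x a) (x b) < δ := by
  obtain ⟨p, -, φ, hφ, hlim⟩ := isCompact_univ.tendsto_subseq fun n => mem_univ (x n)
  obtain ⟨n, hn⟩ := Metric.tendsto_atTop.1 hlim (δ / 2) (half_pos hδ)
  refine ⟨φ n, φ (n + 1), hφ n.lt_succ_self, ?_⟩
  calc dist (x (φ n)) (x (φ (n + 1))) ≤ dist (x (φ n)) p + dist (x (φ (n + 1))) p :=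
        dist_triangle_right _ _ _
    _ < δ / 2 + δ / 2 := add_lt_add (hn n le_rfl) (hn (n + 1) n.le_succ)
    _ = δ := add_halves δ

lemma IsPseudoOrbitZ.exists_isPseudoCycle [CompactSpace X] {f : Λ → X ≃ₜ X} {δ : ℝ}
    (hδ : 0 < δ) {x : ℤ → X} (hx : IsPseudoOrbitZ f δ x) :
    ∃ (N : ℕ) (_ : NeZero N) (z : ZMod N → X) (τ : ZMod N → Λ),
      IsPseudoCycle f (2 * δ) z τ ∧ ∀ i, ∃ m, z i = x m := by
  obtain ⟨σ, hσ⟩ := hx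
  obtain ⟨a, b, hab, hxab⟩ := exists_lt_dist_lt (fun n : ℕ => x n) hδ
  have : NeZero (b - a) := ⟨by omega⟩
  refine ⟨b - a, this, fun i => x ↑(a + i.val), fun i => σ ↑(a + i.val), fun i => ?_,
    fun i => ⟨_, rfl⟩⟩
  obtain ⟨k, hk, rfl⟩ : ∃ k < b - a, (k : ZMod (b - a)) = i := ⟨i.val, i.val_lt, i.natCast_zmod_val⟩
  have hstep : dist (x ↑(a + (k + 1))) (f (σ ↑(a + k)) (x ↑(a + k))) < δ := by
    simpa [add_assoc] using hσ ↑(a + k)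
  simp only [← Nat.cast_succ, ZMod.val_natCast, Nat.mod_eq_of_lt hk]
  rcases (Nat.succ_le_of_lt hk).lt_or_eq with hlt | heq
  · rw [Nat.mod_eq_of_lt hlt]
    linarith
  · rw [heq, Nat.mod_self, add_zero]
    have hb : a + (k + 1) = b := by omega
    rw [hb] at hstep
    calc _ ≤ dist (x a) (x b) + dist (x b) (f (σ ↑(a + k)) (x ↑(a + k))) := dist_triangle _ _ _
      _ < δ + δ := add_lt_add hxab hstep
      _ = 2 * δ := by ring

/-- Closing lemma: a pseudo-cycle is shadowed by a periodic orbit of a nearby IFS. The points of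
the cycle are first made pairwise distinct, then generalized homogeneity supplies a small
homeomorphism `h` sending each `f (τ i) (w i)` to `w (i + 1)`, and `g = h ∘ f`. -/
theorem exists_rhoIFS_lt_of_isPseudoCycle [CompactSpace X] [Finite Λ] [∀ x : X, (𝓝[≠] x).NeBot]
    (hgh : GenHomogeneous X) (f : Λ → X ≃ₜ X) {η ε : ℝ} (hη : 0 < η) (hε : 0 < ε) :
    ∃ δ > 0, ∀ (N : ℕ) [NeZero N] (z : ZMod N → X) (τ : ZMod N → Λ), IsPseudoCycle f δ z τ →
      ∃ g, rhoIFS f g < η ∧ ∃ w : ZMod N → X,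
        (∀ i, dist (w i) (z i) < ε) ∧ ∀ i, g (τ i) (w i) = w (i + 1) := by
  obtain ⟨ε₁, hε₁, hρ⟩ := exists_rhoIFS_trans_lt f hη
  obtain ⟨δ₀, hδ₀, hhom⟩ := hgh ε₁ hε₁
  obtain ⟨δ₁, hδ₁, hcont⟩ := exists_forall_dist_lt_of_continuous (fun l => f l)
    (fun l => (f l).continuous) (show 0 < δ₀ / 3 by positivity)
  refine ⟨δ₀ / 3, by positivity, fun N _ z τ hz => ?_⟩
  set r := min ε (min δ₁ (δ₀ / 3))
  obtain ⟨w, hwz, hw, hfw⟩ := exists_injective_near (fun i => f (τ i))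
    (fun i => (f (τ i)).injective) z (show 0 < r by positivity)
  have hAB : ∀ i, dist (f (τ i) (w i)) (w (i + 1)) ≤ δ₀ := fun i => by
    have h₁ : dist (f (τ i) (w i)) (f (τ i) (z i)) < δ₀ / 3 :=
      hcont _ _ _ ((hwz i).trans_le ((min_le_right _ _).trans (min_le_left _ _)))
    have h₂ : dist (z (i + 1)) (w (i + 1)) < δ₀ / 3 := by
      rw [dist_comm]; exact (hwz _).trans_le ((min_le_right _ _).trans (min_le_right _ _))
    calc _ ≤ dist (f (τ i) (w i)) (f (τ i) (z i)) + dist (f (τ i) (z i)) (z (i + 1))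
          + dist (z (i + 1)) (w (i + 1)) := dist_triangle4 _ _ _ _
      _ ≤ δ₀ := by linarith [dist_comm (f (τ i) (z i)) (z (i + 1)), hz i]
  let e := (Fintype.equivFin (ZMod N)).symm
  obtain ⟨h, hh, hsmall⟩ := hhom _ (fun k => f (τ (e k)) (w (e k))) (fun k => w (e k + 1))
    (hfw.comp e.injective) ((hw.comp (add_left_injective 1)).comp e.injective) fun k => hAB (e k)
  refine ⟨fun l => (f l).trans h, hρ h hsmall, w, fun i => (hwz i).trans_le (min_le_left _ _),
    fun i => ?_⟩
  simpa [e] using hh (e.symm i)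

lemma isClosed_setOf_forall_exists_dist_le [Finite Λ] (f : Λ → X ≃ₜ X) (ε : ℝ) :
    IsClosed {z : ℤ → X | ∀ n, ∃ l, dist (z (n + 1)) (f l (z n)) ≤ ε} := by
  simp only [ofPred_forall, ofPred_exists]
  exact isClosed_iInter fun n => isClosed_iUnion_of_finite fun l =>
    isClosed_le (by fun_prop) continuous_const

lemma exists_eq_of_forall_exists_dist_le [Finite Λ] (F : Λ → X) (a : X)
    (h : ∀ m : ℕ, ∃ l, dist a (F l) ≤ 1 / (m + 1)) : ∃ l, a = F l := by
  have : Nonempty Λ := (h 0).nonempty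
  obtain ⟨l, hl⟩ := Finite.exists_min fun l => dist a (F l)
  refine ⟨l, eq_of_forall_dist_le fun ε hε => ?_⟩
  obtain ⟨m, hm⟩ := exists_nat_one_div_lt hε
  obtain ⟨l', hl'⟩ := h m
  linarith [hl l']

/-- The orbits of IFS `ρ`-close to `f` are approximate orbits of `f`; by compactness of `X ^ ℤ`
the approximate orbits lying in a closed set `D` accumulate at an orbit of `f` in `D`. -/
theorem exists_isOrbitZ_mem_of_forall_rhoIFS_lt [CompactSpace X] [Finite Λ]
    {D : Set (ℤ → X)} (hD : IsClosed D) (f : Λ → X ≃ₜ X)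
    (H : ∀ η > 0, ∃ g, rhoIFS f g < η ∧ ∃ y ∈ D, IsOrbitZ g y) : ∃ y ∈ D, IsOrbitZ f y := by
  let K : ℕ → Set (ℤ → X) := fun m =>
    D ∩ {z | ∀ n, ∃ l, dist (z (n + 1)) (f l (z n)) ≤ 1 / ((m : ℝ) + 1)}
  have hK : ∀ m, IsClosed (K m) := fun m => hD.inter (isClosed_setOf_forall_exists_dist_le f _)
  have hanti : ∀ m, K (m + 1) ⊆ K m := fun m z ⟨hzD, hz⟩ => ⟨hzD, fun n => (hz n).imp
    fun l hl => hl.trans (one_div_le_one_div_of_le (by positivity) (by push_cast; linarith))⟩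
  have hne : ∀ m, (K m).Nonempty := fun m => by
    obtain ⟨g, hg, y, hyD, σ, hσ⟩ := H (1 / ((m : ℝ) + 1)) (by positivity)
    refine ⟨y, hyD, fun n => ⟨σ n, ?_⟩⟩
    rw [hσ, dist_comm]
    exact (dist_apply_le_rhoIFS f g _ _).trans hg.le
  obtain ⟨y, hy⟩ := IsCompact.nonempty_iInter_of_sequence_nonempty_isCompact_isClosed K hanti hne
    (hK 0).isCompact hK
  rw [mem_iInter] at hy
  choose σ hσ using fun n => exists_eq_of_forall_exists_dist_le (fun l => f l (y n)) (y (n + 1))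
    fun m => (hy m).2 n
  exact ⟨y, (hy 0).1, σ, hσ⟩

variable {ι : Type*}

def trappingSets (c : ι → X) (r : ℝ) (f : Λ → X ≃ₜ X) : Set (Set ι) :=
  {L | ∃ y, IsOrbitZ f y ∧ ∀ n, y n ∈ ⋃ j ∈ L, closedBall (c j) r}

theorem exists_forall_rhoIFS_lt_trappingSets_subset [CompactSpace X] [Finite Λ] [Finite ι]
    (c : ι → X) (r : ℝ) (f : Λ → X ≃ₜ X) :
    ∃ η > 0, ∀ g, rhoIFS f g < η → trappingSets c r g ⊆ trappingSets c r f := by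
  have hL : ∀ L : Set ι, ∃ η > 0, ∀ g, rhoIFS f g < η →
      L ∈ trappingSets c r g → L ∈ trappingSets c r f := fun L => by
    by_contra! H
    have hD : IsClosed {y : ℤ → X | ∀ n, y n ∈ ⋃ j ∈ L, closedBall (c j) r} := by
      simp only [ofPred_forall]
      exact isClosed_iInter fun n => (L.toFinite.isClosed_biUnion fun j _ => isClosed_closedBall)
        |>.preimage (continuous_apply n)
    obtain ⟨y, hyL, hy⟩ := exists_isOrbitZ_mem_of_forall_rhoIFS_lt hD f fun η hη =>
      (H η hη).imp fun g ⟨hg, ⟨y, hy, hyL⟩, _⟩ => ⟨hg, y, hyL, hy⟩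
    obtain ⟨-, -, -, hLf⟩ := H 1 one_pos
    exact hLf ⟨y, hy, hyL⟩
  choose η hη hηL using hL
  obtain ⟨L₀, hL₀⟩ := Finite.exists_min η
  exact ⟨η L₀, hη L₀, fun g hg L hLg => hηL L g (hg.trans_le (hL₀ L)) hLg⟩

def TrappingStableAt (c : ι → X) (r : ℝ) (f : Λ → X ≃ₜ X) : Prop :=
  ∃ η > 0, ∀ g, rhoIFS f g < η → trappingSets c r g = trappingSets c r f

theorem TrappingStableAt.exists_forall_rhoIFS_lt [CompactSpace X] {c : ι → X} {r : ℝ}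
    {f : Λ → X ≃ₜ X} (hf : TrappingStableAt c r f) :
    ∃ η > 0, ∀ g, rhoIFS f g < η → TrappingStableAt c r g := by
  obtain ⟨η, hη, hfη⟩ := hf
  refine ⟨η / 2, half_pos hη, fun g hg => ⟨η / 2, half_pos hη, fun g' hg' => ?_⟩⟩
  rw [hfη g' (by linarith [rhoIFS_triangle f g g']), hfη g (by linarith)]

/-- `f ↦ (trappingSets c r f).ncard` takes finitely many values and, by upper semicontinuity of
`trappingSets`, the family is locally constant wherever this count is locally minimal. -/
theorem exists_trappingStableAt_rhoIFS_lt [CompactSpace X] [Finite Λ] [Finite ι] (c : ι → X)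
    (r : ℝ) (f : Λ → X ≃ₜ X) {η : ℝ} (hη : 0 < η) :
    ∃ g, TrappingStableAt c r g ∧ rhoIFS f g < η := by
  let s := {g | rhoIFS f g < η / 2}
  have hfs : f ∈ s := by simp [s, rhoIFS_self, hη]
  let g := argminOn (fun g => (trappingSets c r g).ncard) s ⟨f, hfs⟩
  have hg : rhoIFS f g < η / 2 := argminOn_mem _ s _
  obtain ⟨η₁, hη₁, hsub⟩ := exists_forall_rhoIFS_lt_trappingSets_subset c r g
  refine ⟨g, ⟨min η₁ (η / 2 - rhoIFS f g), lt_min hη₁ (by linarith), fun g' hg' => ?_⟩,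
    by linarith⟩
  have hg's : g' ∈ s := show rhoIFS f g' < η / 2 by
    linarith [rhoIFS_triangle f g g', hg'.trans_le (min_le_right _ _)]
  exact eq_of_subset_of_ncard_le (hsub g' (hg'.trans_le (min_le_left _ _)))
    (argminOn_le (fun g => (trappingSets c r g).ncard) s hg's) (toFinite _)

theorem TrappingStableAt.exists_weakShadow [CompactSpace X] [Finite Λ]
    [∀ x : X, (𝓝[≠] x).NeBot] (hgh : GenHomogeneous X) {c : ι → X} {ε : ℝ} (hε : 0 < ε)
    (hc : ∀ z, ∃ j, dist z (c j) < ε / 8) {f : Λ → X ≃ₜ X} (hf : TrappingStableAt c (ε / 4) f) :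
    ∃ δ > 0, ∀ x, IsPseudoOrbitZ f δ x → ∃ y, IsOrbitZ f y ∧ ∀ n, ∃ m, dist (y n) (x m) < ε := by
  obtain ⟨η, hη, hfη⟩ := hf
  obtain ⟨δ, hδ, hclose⟩ :=
    exists_rhoIFS_lt_of_isPseudoCycle hgh f hη (show 0 < ε / 8 by positivity)
  refine ⟨δ / 2, half_pos hδ, fun x hx => ?_⟩
  obtain ⟨N, _, z, τ, hzτ, hzx⟩ := hx.exists_isPseudoCycle (half_pos hδ)
  rw [mul_div_cancel₀ δ two_ne_zero] at hzτ
  obtain ⟨g, hg, w, hwz, hw⟩ := hclose N z τ hzτ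
  let L := {j | ∃ m, dist (x m) (c j) < ε / 8}
  have hLg : L ∈ trappingSets c (ε / 4) g := by
    refine ⟨_, isOrbitZ_of_forall_apply_eq_add_one hw, fun n => ?_⟩
    obtain ⟨m, hm⟩ := hzx n
    obtain ⟨j, hj⟩ := hc (z n)
    refine mem_biUnion ⟨m, hm ▸ hj⟩ (mem_closedBall.2 ?_)
    linarith [dist_triangle (w n) (z n) (c j), hwz n]
  rw [hfη g hg] at hLg
  obtain ⟨y, hy, hyL⟩ := hLg
  refine ⟨y, hy, fun n => ?_⟩
  obtain ⟨j, ⟨m, hm⟩, hyj⟩ := mem_iUnion₂.1 (hyL n)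
  refine ⟨m, ?_⟩
  linarith [dist_triangle_right (y n) (x m) (c j), mem_closedBall.1 hyj]

lemma exists_finset_forall_exists_dist_lt [CompactSpace X] {r : ℝ} (hr : 0 < r) :
    ∃ t : Finset X, ∀ z : X, ∃ c : t, dist z c < r := by
  obtain ⟨t, -, ht, hcov⟩ := finite_cover_balls_of_compact (isCompact_univ (X := X)) hr
  refine ⟨ht.toFinset, fun z => ?_⟩
  obtain ⟨c, hc, hz⟩ := mem_iUnion₂.1 (hcov (mem_univ z))
  exact ⟨⟨c, ht.mem_toFinset.2 hc⟩, hz⟩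

end

theorem weakShadowing_generic_general
    {X Λ : Type*} [MetricSpace X] [CompactSpace X] [Finite Λ]
    (hgh : GenHomogeneous X)
    (hni : ∀ x : X, ∀ r > (0 : ℝ), ∃ z : X, z ≠ x ∧ dist z x < r) :
    ∃ S : ℕ → Set (Λ → X ≃ₜ X),
      (∀ n, ∀ f ∈ S n, ∃ η > (0 : ℝ), ∀ g : Λ → X ≃ₜ X, rhoIFS f g < η → g ∈ S n) ∧
      (∀ n, ∀ f : Λ → X ≃ₜ X, ∀ η > (0 : ℝ), ∃ g ∈ S n, rhoIFS f g < η) ∧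
      (⋂ n, S n) ⊆ {f : Λ → X ≃ₜ X | WeakShadowingZ f} := by
  have := nhdsNE_neBot_of_forall_exists_dist_lt hni
  choose net hnet using fun n : ℕ =>
    exists_finset_forall_exists_dist_lt (X := X) (show 0 < 1 / ((n : ℝ) + 1) / 8 by positivity)
  refine ⟨fun n => {f | TrappingStableAt ((↑) : net n → X) (1 / ((n : ℝ) + 1) / 4) f},
    fun n f hf => hf.exists_forall_rhoIFS_lt,
    fun n f η hη => exists_trappingStableAt_rhoIFS_lt _ _ f hη, fun f hf ε hε => ?_⟩
  obtain ⟨n, hn⟩ := exists_nat_one_div_lt hε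
  obtain ⟨δ, hδ, hsh⟩ := (Set.mem_iInter.1 hf n).exists_weakShadow hgh (by positivity) (hnet n)
  exact ⟨δ, hδ, fun x hx => (hsh x hx).imp fun y hy =>
    ⟨hy.1, fun k => (hy.2 k).imp fun m hm => hm.trans hn⟩⟩

/-- On a compact, generalized homogeneous metric space with no isolated points, the weak
shadowing property on `ℤ` is generic in `(H_Λ(X), ρ)`: the set of IFS with weak shadowing
contains a countable intersection of `ρ`-open `ρ`-dense sets. -/
theorem weakShadowing_generic
    {X Λ : Type*} [MetricSpace X] [CompactSpace X] [Finite Λ] [Nonempty Λ]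
    (hgh : GenHomogeneous X)
    (hni : ∀ x : X, ∀ r > (0 : ℝ), ∃ z : X, z ≠ x ∧ dist z x < r) :
    ∃ S : ℕ → Set (Λ → X ≃ₜ X),
      (∀ n, ∀ f ∈ S n, ∃ η > (0 : ℝ), ∀ g : Λ → X ≃ₜ X, rhoIFS f g < η → g ∈ S n) ∧
      (∀ n, ∀ f : Λ → X ≃ₜ X, ∀ η > (0 : ℝ), ∃ g ∈ S n, rhoIFS f g < η) ∧
      (⋂ n, S n) ⊆ {f : Λ → X ≃ₜ X | WeakShadowingZ f} :=
  weakShadowing_generic_general hgh hni
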